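/- arXiv:1904.13206 — 2 statements merged into one kernel-verified Lean document; each statement's English description precedes it below -/
import Mathlib

section
/- Let F be a field of characteristic greater than d and g : V → U a nonzero polynomial map of total degree exactly d. Then the map g'(X_1,...,X_d) = Σ_{S ⊆ [d]} (-1)^{|S|} g(Σ_{j∈S} X_j) is not identically zero. -/
/-!
Take all `X j` equal to one point `x`. Then the alternating sum only sees `|S|`, and equals
`(-1)^d Δ^d [t ↦ g (t • x)] (0)`. Since `t ↦ g (t • x)` is a polynomial in `t` of degree
at most `d` whose `t^d`-coefficient is the top homogeneous component `g_d (x)`, this is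
`(-1)^d d! g_d (x)`. Here `d! ≠ 0`, and as `F` has more than `d` elements the nonzero
homogeneous `g_d` does not vanish at some `x`.
-/
open Finset MvPolynomial fwdDiff
open scoped Nat

namespace MvPolynomial

variable {R σ : Type*} [CommRing R]

theorem IsHomogeneous.eval_smul {p : MvPolynomial σ R} {n : ℕ} (hp : p.IsHomogeneous n)
    (c : R) (x : σ → R) : eval (c • x) p = c ^ n * eval x p := by
  rw [eval_eq, eval_eq, mul_sum]
  refine sum_congr rfl fun s hs => ?_
  have hdeg : ∑ i ∈ s.support, s i = n := by
    simpa [Finsupp.weight_apply, Finsupp.sum] using hp (mem_support_iff.mp hs)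
  simp_rw [Pi.smul_apply, smul_eq_mul, mul_pow, prod_mul_distrib, prod_pow_eq_pow_sum, hdeg]
  ring

theorem homogeneousComponent_totalDegree_ne_zero {p : MvPolynomial σ R} (hp : p ≠ 0) :
    homogeneousComponent p.totalDegree p ≠ 0 := by
  intro h
  have hsum := sum_homogeneousComponent p
  rw [sum_range_succ, h, add_zero] at hsum
  have hle : p.totalDegree ≤ p.totalDegree - 1 := by
    conv_lhs => rw [← hsum]
    exact totalDegree_finsetSum_le fun i hi =>
      (homogeneousComponent_isHomogeneous i p).totalDegree_le.trans (by grind)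
  obtain h0 | hpos := Nat.eq_zero_or_pos p.totalDegree
  · rw [h0, range_zero, sum_empty] at hsum
    exact hp hsum.symm
  · omega

theorem eval_smul_eq_sum_homogeneousComponent {p : MvPolynomial σ R} {n : ℕ}
    (hp : p.totalDegree ≤ n) (c : R) (x : σ → R) :
    eval (c • x) p = ∑ k ∈ range (n + 1), eval x (homogeneousComponent k p) * c ^ k := by
  conv_lhs => rw [← sum_homogeneousComponent p]
  rw [map_sum]
  refine sum_subset (range_subset_range.mpr (Nat.succ_le_succ hp)) (fun k _ hk => ?_) |>.trans ?_
  · rw [homogeneousComponent_eq_zero k p (by grind), map_zero]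
  · exact sum_congr rfl fun k _ => by
      rw [(homogeneousComponent_isHomogeneous k p).eval_smul, mul_comm]

end MvPolynomial

theorem fwdDiff_iter_sum_range_succ_mul_pow {R : Type*} [CommRing R] (c : ℕ → R) (n : ℕ) :
    (Δ_[1])^[n] (fun r : R => ∑ k ∈ range (n + 1), c k * r ^ k) = fun _ => c n * n ! := by
  have hsplit : (fun r : R => ∑ k ∈ range (n + 1), c k * r ^ k)
      = (fun r => ∑ k ∈ range n, c k * r ^ k) + c n • fun r => r ^ n := by
    ext r; simp [sum_range_succ]
  rw [hsplit, fwdDiff_iter_add, fwdDiff_iter_sum_mul_pow_eq_zero, fwdDiff_iter_const_smul,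
    fwdDiff_iter_eq_factorial, zero_add]
  rfl

theorem MvPolynomial.fwdDiff_iter_eval_smul {R σ : Type*} [CommRing R] {p : MvPolynomial σ R}
    {n : ℕ} (hp : p.totalDegree ≤ n) (x : σ → R) :
    (Δ_[1])^[n] (fun c : R => eval (c • x) p) =
      fun _ => eval x (homogeneousComponent n p) * n ! := by
  simp_rw [eval_smul_eq_sum_homogeneousComponent hp]
  exact fwdDiff_iter_sum_range_succ_mul_pow _ n

theorem sum_fin_neg_one_pow_card_smul_eq_fwdDiff_iter {R G : Type*} [CommRing R] [AddCommGroup G]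
    [Module R G] (f : R → G) (d : ℕ) :
    ∑ S : Finset (Fin d), (-1 : R) ^ S.card • f S.card = (-1 : R) ^ d • (Δ_[1])^[d] f 0 := by
  rw [← powerset_univ, sum_powerset_apply_card (fun k => (-1 : R) ^ k • f k), card_univ,
    Fintype.card_fin, fwdDiff_iter_eq_sum_shift, smul_sum]
  refine sum_congr rfl fun k hk => ?_
  have hkd : k ≤ d := Nat.lt_succ_iff.mp (mem_range.mp hk)
  have hsign : (-1 : R) ^ d * (-1) ^ (d - k) = (-1) ^ k := by
    rw [← pow_add, show d + (d - k) = k + 2 * (d - k) by omega, pow_add, pow_mul]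
    simp
  rw [zero_add, nsmul_one, ← Int.cast_smul_eq_zsmul R, smul_smul, ← Nat.cast_smul_eq_nsmul R,
    smul_smul]
  push_cast
  rw [← mul_assoc, hsign, mul_comm]

theorem natCast_lt_mk_of_natCast_ne_zero {R : Type*} [AddGroupWithOne R] {d : ℕ}
    (h : ∀ k : ℕ, 0 < k → k ≤ d → (k : R) ≠ 0) : (d : Cardinal) < Cardinal.mk R := by
  classical
  have hne : ∀ i j : ℕ, i < j → j ≤ d → (i : R) ≠ j := fun i j hij hj hij' =>
    h (j - i) (by omega) (by omega) (by rw [Nat.cast_sub hij.le, hij', sub_self])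
  have hinj : Set.InjOn (Nat.cast : ℕ → R) (Iic d) := by
    intro i hi j hj hij
    simp only [coe_Iic, Set.mem_Iic] at hi hj
    by_contra hij'
    rcases Nat.lt_or_gt_of_ne hij' with hlt | hlt
    exacts [hne i j hlt hj hij, hne j i hlt hi hij.symm]
  calc (d : Cardinal) < ((Iic d).image (Nat.cast : ℕ → R)).card := by
        rw [card_image_of_injOn hinj, Nat.card_Iic]; exact_mod_cast d.lt_succ_self
    _ ≤ Cardinal.mk R := by rw [← Cardinal.mk_coe_finset]; exact Cardinal.mk_set_le _

theorem natCast_factorial_ne_zero {R : Type*} [Semiring R] [NoZeroDivisors R] [Nontrivial R]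
    {d : ℕ} (h : ∀ k : ℕ, 0 < k → k ≤ d → (k : R) ≠ 0) : (d ! : R) ≠ 0 := by
  induction d with
  | zero => simp
  | succ d ih =>
    rw [Nat.factorial_succ, Nat.cast_mul]
    exact mul_ne_zero (h _ d.succ_pos le_rfl) (ih fun k hk hkd => h k hk (hkd.trans d.le_succ))

/-- For F of characteristic greater than d and g a nonzero
polynomial map of total degree exactly d, the inclusion–exclusion map
g'(X_1,...,X_d) = Σ_{S ⊆ [d]} (-1)^{|S|} g(Σ_{j∈S} X_j) is not identically
zero. -/
theorem harmonic_stmt1 (F : Type*) [Field F] (m n d : ℕ)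
    (hchar : ∀ k : ℕ, 0 < k → k ≤ d → (k : F) ≠ 0)
    (G : Fin n → MvPolynomial (Fin m) F)
    (hG : G ≠ 0)
    (hdeg : ∀ u, (G u).totalDegree ≤ d)
    (hexact : ∃ u, (G u).totalDegree = d)
    (g : (Fin m → F) → (Fin n → F))
    (hg : ∀ x u, g x u = MvPolynomial.eval x (G u)) :
    ∃ X : Fin d → (Fin m → F),
      ∑ S : Finset (Fin d), ((-1 : F) ^ S.card) • g (∑ j ∈ S, X j) ≠ 0 := by
  obtain ⟨u, hu, hud⟩ : ∃ u, G u ≠ 0 ∧ (G u).totalDegree = d := by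
    obtain rfl | hd := Nat.eq_zero_or_pos d
    · obtain ⟨u, hu⟩ := Function.ne_iff.mp hG
      exact ⟨u, hu, Nat.le_zero.mp (hdeg u)⟩
    · obtain ⟨u, hu⟩ := hexact
      exact ⟨u, fun h => by simp [h] at hu; omega, hu⟩
  obtain ⟨x, hx⟩ : ∃ x, eval x (homogeneousComponent d (G u)) ≠ 0 := by
    by_contra! h
    exact hud ▸ homogeneousComponent_totalDegree_ne_zero hu <|
      (homogeneousComponent_isHomogeneous d _).eq_zero_of_forall_eval_eq_zero_of_le_card h
        (natCast_lt_mk_of_natCast_ne_zero hchar).le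
  refine ⟨fun _ => x, fun h => ?_⟩
  have hsum :
      ∑ S : Finset (Fin d), (-1 : F) ^ S.card • eval ((S.card : F) • x) (G u) = 0 := by
    simpa [hg, Nat.cast_smul_eq_nsmul] using congr_fun h u
  rw [sum_fin_neg_one_pow_card_smul_eq_fwdDiff_iter (fun c => eval (c • x) (G u)),
    fwdDiff_iter_eval_smul (hdeg u)] at hsum
  simp only [smul_eq_mul, mul_eq_zero, pow_eq_zero_iff', neg_eq_zero, one_ne_zero, false_and,
    false_or] at hsum
  exact hsum.elim hx (natCast_factorial_ne_zero hchar)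
end

section
/- Work over F_5. Let X_1, X_2, Z ∈ F_5 be arbitrary and let g : F_5 → F_5 be any polynomial function of degree at most 2. Define X̃_1 = Z, X̃_2 = 2X_1 + 4Z, X̃_3 = 3X_2 + 4X_1 + 4Z, X̃_4 = 2X_2 + 2X_1 + 2Z. Then 2g(X̃_1) + g(X̃_2) + 3g(X̃_3) + g(X̃_4) = g(X_1) + g(X_2). -/
/-- K=2, deg g = 2 instance of Harmonic Coding over F_5. -/
theorem harmonic_stmt3 (X1 X2 Z a b c : ZMod 5)
    (g : ZMod 5 → ZMod 5) (hg : ∀ x, g x = a * x ^ 2 + b * x + c) :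
    2 * g Z + g (2 * X1 + 4 * Z) + 3 * g (3 * X2 + 4 * X1 + 4 * Z)
        + g (2 * X2 + 2 * X1 + 2 * Z)
      = g X1 + g X2 := by
  simp only [hg]
  have h120 : (120:ZMod 5) = 0 := by decide
  have h80 : (80:ZMod 5) = 0 := by decide
  have h70 : (70:ZMod 5) = 0 := by decide
  have h56 : (56:ZMod 5) = 1 := by decide
  have h31 : (31:ZMod 5) = 1 := by decide
  have h20 : (20:ZMod 5) = 0 := by decide
  have h16 : (16:ZMod 5) = 1 := by decide
  have h11 : (11:ZMod 5) = 1 := by decide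
  have h7 : (7:ZMod 5) = 2 := by decide
  ring_nf
  rw [h120, h80, h70, h56, h31, h20, h16, h11, h7]
  ring
end
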